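/- Every solution a(t) of the dyadic system with a_j(0) ≥ 0 satisfies the energy inequality |a(t)|² ≤ |a(t₀)|² + 2∫_{t₀}^t (f, a(τ)) dτ for all 0 ≤ t₀ ≤ t, where |·| is the ℓ² norm and (f,a) = f₀ a₀. -/

import Mathlib

/-!
The energy `∑ a_j²` of the first `N + 1` modes changes at rate `2 f₀ a₀ − 2 λᴺ a_N² a_{N+1}`: the
nonlinear terms telescope, leaving only the flux through mode `N`. That flux is nonnegative
because the components stay nonnegative — `a_j` obeys `a_j' ≥ −λʲ a_{j+1} a_j`, so an
integrating factor makes `a_j` times a positive function nondecreasing. Hence every partial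
energy obeys the inequality, and so does its supremum.
-/

open Real Set MeasureTheory Finset Filter

noncomputable def lam : ℝ := (2:ℝ) ^ ((5:ℝ)/2)

/-- Right-hand side of the dyadic system: `da_j/dt = λ^{j-1} a_{j-1}² − λ^j a_j a_{j+1} + f_j`
with `a_{-1}=0`, forcing `f_0 > 0`, `f_j = 0` for `j ≥ 1`. -/
noncomputable def dyadicRHS (f0 : ℝ) (a : ℕ → ℝ) : ℕ → ℝ
  | 0 => -(a 0 * a 1) + f0
  | (j+1) => lam ^ j * (a j)^2 - lam ^ (j+1) * a (j+1) * a (j+2)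

/-- A weak (= classical) solution of the dyadic system on `[0,∞)`: an `ℓ²`-valued
function whose components are differentiable and satisfy the ODEs. -/
def IsDyadicSolution (f0 : ℝ) (a : ℝ → ℕ → ℝ) : Prop :=
  (∀ t ∈ Ici (0:ℝ), Summable (fun j => (a t j)^2)) ∧
  (∀ j, ∀ t ∈ Ici (0:ℝ), HasDerivWithinAt (fun s => a s j) (dyadicRHS f0 (a t) j) (Ici 0) t)

theorem nonneg_of_hasDerivWithinAt_add_mul_nonneg {x x' c : ℝ → ℝ} {t₀ t : ℝ}
    (hc : ContinuousOn c (Ici t₀))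
    (hx : ∀ s ∈ Ici t₀, HasDerivWithinAt x (x' s) (Ici t₀) s)
    (hx' : ∀ s ∈ Ici t₀, 0 ≤ x' s + c s * x s) (hx₀ : 0 ≤ x t₀) (ht : t ∈ Ici t₀) :
    0 ≤ x t := by
  set C : ℝ → ℝ := fun s => c (max t₀ s)
  have hC : Continuous C :=
    hc.comp_continuous (continuous_const.max continuous_id) fun _ => mem_Ici.mpr (le_max_left _ _)
  set I : ℝ → ℝ := fun u => ∫ s in t₀..u, C s
  have hI (u : ℝ) : HasDerivAt I (C u) u :=
    intervalIntegral.integral_hasDerivAt_right (hC.intervalIntegrable _ _)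
      (hC.stronglyMeasurableAtFilter _ _) hC.continuousAt
  set g : ℝ → ℝ := fun u => exp (I u) * x u
  have hg : ∀ u ∈ Ici t₀,
      HasDerivWithinAt g (exp (I u) * (x' u + c u * x u)) (Ici t₀) u := by
    intro u hu
    refine ((hI u).hasDerivWithinAt.exp.mul (hx u hu)).congr_deriv ?_
    have hCu : C u = c u := congrArg c (max_eq_right (mem_Ici.mp hu))
    rw [hCu]
    ring
  have hmono : MonotoneOn g (Ici t₀) :=
    monotoneOn_of_hasDerivWithinAt_nonneg (convex_Ici t₀)
      (fun u hu => (hg u hu).continuousWithinAt)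
      (fun u hu => (hg u (interior_subset hu)).mono interior_subset)
      (fun u hu => mul_nonneg (exp_nonneg _) (hx' u (interior_subset hu)))
  have hgt : 0 ≤ g t := (mul_nonneg (exp_nonneg _) hx₀).trans (hmono self_mem_Ici ht ht)
  exact nonneg_of_mul_nonneg_right hgt (exp_pos _)

theorem lam_pos : 0 < lam := by unfold lam; positivity

theorem dyadicRHS_add_lam_pow_mul_nonneg {f0 : ℝ} (hf0 : 0 ≤ f0) (v : ℕ → ℝ) (j : ℕ) :
    0 ≤ dyadicRHS f0 v j + lam ^ j * v (j + 1) * v j := by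
  cases j with
  | zero => simp only [dyadicRHS]; linarith
  | succ k =>
    have hsource : 0 ≤ lam ^ k * v k ^ 2 := by have := lam_pos; positivity
    simp only [dyadicRHS]
    linarith

theorem sum_range_two_mul_dyadicRHS (f0 : ℝ) (v : ℕ → ℝ) (N : ℕ) :
    ∑ j ∈ range (N + 1), 2 * v j * dyadicRHS f0 v j
      = 2 * (f0 * v 0) - 2 * lam ^ N * v N ^ 2 * v (N + 1) := by
  induction N with
  | zero => simp [dyadicRHS]; ring
  | succ n ih =>
    rw [sum_range_succ, ih]
    simp only [dyadicRHS]
    ring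

namespace IsDyadicSolution

variable {f0 : ℝ} {a : ℝ → ℕ → ℝ}

theorem continuousOn (ha : IsDyadicSolution f0 a) (j : ℕ) :
    ContinuousOn (fun s => a s j) (Ici (0:ℝ)) :=
  fun s hs => (ha.2 j s hs).continuousWithinAt

theorem nonneg (ha : IsDyadicSolution f0 a) (hf0 : 0 ≤ f0) (h0 : ∀ j, 0 ≤ a 0 j) (j : ℕ)
    {t : ℝ} (ht : t ∈ Ici (0:ℝ)) : 0 ≤ a t j :=
  nonneg_of_hasDerivWithinAt_add_mul_nonneg (c := fun s => lam ^ j * a s (j + 1))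
    ((ha.continuousOn (j + 1)).const_smul (lam ^ j)) (ha.2 j)
    (fun s _ => dyadicRHS_add_lam_pow_mul_nonneg hf0 (a s) j) (h0 j) ht

theorem hasDerivWithinAt_sum_range_sq (ha : IsDyadicSolution f0 a) (N : ℕ) {t : ℝ}
    (ht : t ∈ Ici (0:ℝ)) :
    HasDerivWithinAt (fun u => ∑ j ∈ range (N + 1), a u j ^ 2)
      (2 * (f0 * a t 0) - 2 * lam ^ N * a t N ^ 2 * a t (N + 1)) (Ici (0:ℝ)) t := by
  rw [← sum_range_two_mul_dyadicRHS]
  refine HasDerivWithinAt.fun_sum fun j _ => ?_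
  simpa [mul_comm, mul_left_comm] using (ha.2 j t ht).fun_pow 2

theorem sum_range_sq_le (ha : IsDyadicSolution f0 a) (hf0 : 0 ≤ f0) (h0 : ∀ j, 0 ≤ a 0 j)
    (N : ℕ) {t0 t : ℝ} (ht0 : 0 ≤ t0) (htt : t0 ≤ t) :
    ∑ j ∈ range (N + 1), a t j ^ 2
      ≤ ∑ j ∈ range (N + 1), a t0 j ^ 2 + 2 * ∫ τ in t0..t, f0 * a τ 0 := by
  have hIcc : Icc t0 t ⊆ Ici (0:ℝ) := fun x hx => ht0.trans hx.1
  have hderiv (x : ℝ) (hx : x ∈ Icc t0 t) := ha.hasDerivWithinAt_sum_range_sq N (hIcc hx)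
  have hsource : ContinuousOn (fun τ => 2 * (f0 * a τ 0)) (Icc t0 t) := by
    have := (ha.continuousOn 0).mono hIcc
    fun_prop
  have key := intervalIntegral.sub_le_integral_of_hasDeriv_right_of_le htt
    (fun x hx => (hderiv x hx).continuousWithinAt.mono hIcc)
    (fun x hx => (hderiv x (Ioo_subset_Icc_self hx)).mono
      fun _ hy => mem_Ici.mpr ((hIcc (Ioo_subset_Icc_self hx)).out.trans hy.out.le))
    (hsource.integrableOn_compact isCompact_Icc)
    (fun x hx => by
      have hflux : 0 ≤ 2 * lam ^ N * a x N ^ 2 * a x (N + 1) := by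
        have := lam_pos
        have := ha.nonneg hf0 h0 (N + 1) (hIcc (Ioo_subset_Icc_self hx))
        positivity
      linarith)
  rw [intervalIntegral.integral_const_mul] at key
  linarith

end IsDyadicSolution

theorem energy_inequality (f0 : ℝ) (hf0 : 0 < f0) (a : ℝ → ℕ → ℝ)
    (ha : IsDyadicSolution f0 a) (h0 : ∀ j, 0 ≤ a 0 j) :
    ∀ t0 t : ℝ, 0 ≤ t0 → t0 ≤ t →
      ∑' j, (a t j)^2 ≤ ∑' j, (a t0 j)^2 + 2 * ∫ τ in t0..t, f0 * a τ 0 := by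
  intro t0 t ht0 htt
  refine Real.tsum_le_of_sum_range_le (fun j => sq_nonneg _) fun n => ?_
  calc ∑ j ∈ range n, a t j ^ 2
      ≤ ∑ j ∈ range (n + 1), a t j ^ 2 := by
        rw [sum_range_succ]; exact le_add_of_nonneg_right (sq_nonneg _)
    _ ≤ ∑ j ∈ range (n + 1), a t0 j ^ 2 + 2 * ∫ τ in t0..t, f0 * a τ 0 :=
        ha.sum_range_sq_le hf0.le h0 n ht0 htt
    _ ≤ ∑' j, a t0 j ^ 2 + 2 * ∫ τ in t0..t, f0 * a τ 0 := by
        gcongr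
        exact (ha.1 t0 ht0).sum_le_tsum _ fun j _ => sq_nonneg _
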